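/- Let M be an R-module whose Jacobson radical Jac(M) is small in M and which has finite dual Goldie dimension, over a commutative unital ring R. If S_M is nonempty, then σ(M,R) = min_{m ∈ S_M} |R/m| + 1. If S_M is empty and M is finitely generated, then M is cyclic. -/

import Mathlib

universe u

open Cardinal

/-- The covering number of a module: the least cardinal number of proper submodules whose
union is the whole module. -/
noncomputable def coveringNumber (R M : Type u) [Ring R] [AddCommGroup M] [Module R M] :
    Cardinal.{u} :=
  sInf {c : Cardinal.{u} | ∃ S : Set (Submodule R M),
    (∀ N ∈ S, N ≠ ⊤) ∧ (⋃ N ∈ S, (N : Set M)) = Set.univ ∧ #S = c}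

/-- The set of maximal ideals `m` of `R` with `dim_{R/m} (M/mM) ≥ 2`. -/
def SMax (R M : Type u) [CommRing R] [AddCommGroup M] [Module R M] :
    Set (MaximalSpectrum R) :=
  {m | 2 ≤ Module.rank (R ⧸ m.asIdeal) (M ⧸ (m.asIdeal • ⊤ : Submodule R M))}

/-- The Jacobson radical of a module: the intersection of all maximal (proper) submodules. -/
def moduleJacobson (R M : Type u) [Ring R] [AddCommGroup M] [Module R M] :
    Submodule R M :=
  sInf {N : Submodule R M | IsCoatom N}

/-- A submodule `N` of `M` is small (superfluous) if `N + K = M` implies `K = M`. -/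
def IsSmallSubmodule {R M : Type u} [Ring R] [AddCommGroup M] [Module R M]
    (N : Submodule R M) : Prop :=
  ∀ K : Submodule R M, N ⊔ K = ⊤ → K = ⊤

/-!
Modulo the small radical `J`, a cover of `M` by proper submodules becomes one of the
finite-length semisimple module `N = M/J`, and may be assumed to consist of maximal submodules.
A maximal submodule `P` contains every `m`-torsion part `N[m]` (an isotypic component) except
the one for `m = ann(N/P)`, so a sum of well-chosen elements of the components shows that for some `m` the
maximal submodules with annihilator `m` already cover `N[m]`, an `R/m`-vector space with
`dim N[m] ≤ dim M/mM`. A vector space covered by proper subspaces has dimension at least `2`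
and needs at least `|k| + 1` of them: either some plane lies in no member, and the `|k| + 1`
lines of that plane need distinct members, or the members through a fixed vector cover the
quotient by its line. Conversely, if `dim M/mM ≥ 2` then `M` maps onto `(R/m)²`, whose
`|R/m| + 1` lines pull back to a cover of `M`. Finally, a non-cyclic module is covered by its
proper cyclic submodules, so when `S_M` is empty `M` is cyclic.
-/

namespace Submodule

structure IsProperCover {R M : Type*} [Ring R] [AddCommGroup M] [Module R M]
    (S : Set (Submodule R M)) : Prop where
  ne_top : ∀ p ∈ S, p ≠ ⊤
  exists_mem : ∀ x : M, ∃ p ∈ S, x ∈ p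

section Ring

variable {R M N : Type*} [Ring R] [AddCommGroup M] [Module R M] [AddCommGroup N] [Module R N]

theorem isProperCover_iff {S : Set (Submodule R M)} :
    IsProperCover S ↔ (∀ p ∈ S, p ≠ ⊤) ∧ ⋃ p ∈ S, (p : Set M) = Set.univ := by
  simp only [Set.eq_univ_iff_forall, Set.mem_iUnion₂, SetLike.mem_coe, exists_prop]
  exact ⟨fun h => ⟨h.1, h.2⟩, fun h => ⟨h.1, h.2⟩⟩

theorem isProperCover_range_span_singleton (h : ∀ x : M, span R {x} ≠ ⊤) :
    IsProperCover (Set.range fun x : M => span R {x}) where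
  ne_top := by rintro _ ⟨x, rfl⟩; exact h x
  exists_mem x := ⟨_, ⟨x, rfl⟩, mem_span_singleton_self x⟩

namespace IsProperCover

variable {S : Set (Submodule R M)}

theorem span_singleton_ne_top (hS : IsProperCover S) (x : M) : span R {x} ≠ ⊤ := by
  obtain ⟨p, hp, hx⟩ := hS.exists_mem x
  intro h
  exact hS.ne_top p hp (top_le_iff.mp (h ▸ (span_singleton_le_iff_mem x p).mpr hx))

theorem comap {S : Set (Submodule R N)} (hS : IsProperCover S) (f : M →ₗ[R] N)
    (hf : ∀ p ∈ S, ¬ LinearMap.range f ≤ p) : IsProperCover (comap f '' S) where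
  ne_top := by
    rintro _ ⟨p, hp, rfl⟩ h
    exact hf p hp (LinearMap.range_le_iff_comap.mpr h)
  exists_mem x := by
    obtain ⟨p, hp, hx⟩ := hS.exists_mem (f x)
    exact ⟨_, ⟨p, hp, rfl⟩, hx⟩

theorem comap_of_surjective {S : Set (Submodule R N)} (hS : IsProperCover S) {f : M →ₗ[R] N}
    (hf : Function.Surjective f) : IsProperCover (Submodule.comap f '' S) :=
  hS.comap f fun p hp h => hS.ne_top p hp (top_le_iff.mp (LinearMap.range_eq_top.mpr hf ▸ h))

theorem map_mkQ (hS : IsProperCover S) (q : Submodule R M)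
    (hq : ∀ p ∈ S, q ⊔ p = ⊤ → p = ⊤) : IsProperCover (map q.mkQ '' S) where
  ne_top := by
    rintro _ ⟨p, hp, rfl⟩ h
    exact hS.ne_top p hp (hq p hp ((map_mkQ_eq_top q p).mp h))
  exists_mem x := by
    obtain ⟨x, rfl⟩ := q.mkQ_surjective x
    obtain ⟨p, hp, hx⟩ := hS.exists_mem x
    exact ⟨_, ⟨p, hp, rfl⟩, mem_map_of_mem hx⟩

theorem exists_isCoatom [IsCoatomic (Submodule R M)] (hS : IsProperCover S) :
    ∃ U : Set (Submodule R M), IsProperCover U ∧ (∀ P ∈ U, IsCoatom P) ∧ #U ≤ #S := by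
  have exists_le : ∀ p : S, ∃ P : Submodule R M, IsCoatom P ∧ (p : Submodule R M) ≤ P :=
    fun p => (eq_top_or_exists_le_coatom (p : Submodule R M)).resolve_left (hS.ne_top p p.2)
  choose c hc using exists_le
  refine ⟨Set.range c, ⟨?_, fun x => ?_⟩, ?_, mk_range_le⟩
  · rintro _ ⟨p, rfl⟩; exact (hc p).1.1
  · obtain ⟨p, hp, hx⟩ := hS.exists_mem x
    exact ⟨_, ⟨⟨p, hp⟩, rfl⟩, (hc ⟨p, hp⟩).2 hx⟩
  · rintro _ ⟨p, rfl⟩; exact (hc p).1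

end IsProperCover

end Ring

theorem exists_restrictScalars_eq {R A M : Type*} [CommSemiring R] [Semiring A] [Algebra R A]
    [AddCommMonoid M] [Module R M] [Module A M] [IsScalarTower R A M]
    (hsur : Function.Surjective (algebraMap R A)) (p : Submodule R M) :
    ∃ q : Submodule A M, q.restrictScalars R = p :=
  ⟨span A p, by rw [restrictScalars_span R A hsur, span_eq]⟩

theorem IsProperCover.preimage_restrictScalars {R A M : Type*} [CommRing R] [Ring A]
    [Algebra R A] [AddCommGroup M] [Module R M] [Module A M] [IsScalarTower R A M]
    (hsur : Function.Surjective (algebraMap R A)) {S : Set (Submodule R M)}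
    (hS : IsProperCover S) : IsProperCover (restrictScalars R ⁻¹' S : Set (Submodule A M)) where
  ne_top q hq h := hS.ne_top _ hq (by rw [h, restrictScalars_top])
  exists_mem x := by
    obtain ⟨p, hp, hx⟩ := hS.exists_mem x
    obtain ⟨q, rfl⟩ := exists_restrictScalars_eq hsur p
    exact ⟨q, hp, hx⟩

theorem IsProperCover.image_restrictScalars {R A M : Type*} [Ring R] [Ring A]
    [AddCommGroup M] [Module R M] [Module A M] [SMul R A] [IsScalarTower R A M]
    {S : Set (Submodule A M)} (hS : IsProperCover S) :
    IsProperCover (restrictScalars R '' S) where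
  ne_top := by
    rintro _ ⟨p, hp, rfl⟩ h
    exact hS.ne_top p hp (restrictScalars_eq_top_iff _ _ _ |>.mp h)
  exists_mem x := by
    obtain ⟨p, hp, hx⟩ := hS.exists_mem x
    exact ⟨_, ⟨p, hp, rfl⟩, hx⟩

section Field

variable {k V : Type u} [Field k] [AddCommGroup V] [Module k V]

theorem exists_isProperCover_prod_card_eq :
    ∃ S : Set (Submodule k (k × k)), IsProperCover S ∧ #S = #k + 1 := by
  let L : Option k → Submodule k (k × k) := fun o =>
    o.elim (LinearMap.ker (LinearMap.fst k k k))
      fun t => LinearMap.ker (LinearMap.snd k k k - t • LinearMap.fst k k k)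
  have mem_none (v : k × k) : v ∈ L none ↔ v.1 = 0 := by simp [L]
  have mem_some (t : k) (v : k × k) : v ∈ L (some t) ↔ v.2 = t * v.1 := by
    simp [L, sub_eq_zero]
  have hL : Function.Injective L := by
    rintro (_ | t) (_ | s) h
    · rfl
    · have := (mem_some s (0, 1)).mp (h ▸ (mem_none _).mpr rfl); simp at this
    · have := (mem_some t (0, 1)).mp (h ▸ (mem_none _).mpr rfl); simp at this
    · simpa using (mem_some s (1, t)).mp (h ▸ (mem_some t (1, t)).mpr (mul_one t).symm)
  refine ⟨Set.range L, ⟨?_, fun v => ?_⟩, by rw [mk_range_eq L hL, mk_option]⟩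
  · rintro _ ⟨_ | t, rfl⟩ h
    · simpa using (mem_none (1, 0)).mp (h ▸ mem_top)
    · simpa using (mem_some t (0, 1)).mp (h ▸ mem_top)
  · by_cases hv : v.1 = 0
    · exact ⟨_, ⟨none, rfl⟩, (mem_none v).mpr hv⟩
    · exact ⟨_, ⟨some (v.2 / v.1), rfl⟩, (mem_some _ v).mpr (div_mul_cancel₀ _ hv).symm⟩

theorem IsProperCover.card_add_one_le_of_prod {S : Set (Submodule k (k × k))}
    (hS : IsProperCover S) : #k + 1 ≤ #S := by
  -- Any two of the `|k| + 1` points `(0, 1)`, `(1, t)` span `k × k`.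
  let p : Option k → k × k := fun o => o.elim (0, 1) fun t => (1, t)
  have eq_top {W : Submodule k (k × k)} {t : k} (h₀ : ((0 : k), (1 : k)) ∈ W)
      (h₁ : ((1 : k), t) ∈ W) : W = ⊤ := by
    refine eq_top_iff'.mpr fun v => ?_
    convert W.add_mem (W.smul_mem v.1 h₁) (W.smul_mem (v.2 - v.1 * t) h₀) using 1
    ext <;> simp
  choose g hgS hg using fun o => hS.exists_mem (p o)
  have hg_inj : Function.Injective g := by
    rintro (_ | t) (_ | s) h
    · rfl
    · exact absurd (eq_top (hg none) (h ▸ hg (some s))) (hS.ne_top _ (hgS none))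
    · exact absurd (eq_top (h ▸ hg none) (hg (some t))) (hS.ne_top _ (hgS (some t)))
    · by_contra hts
      have hts : t - s ≠ 0 := sub_ne_zero.mpr fun h' => hts (congrArg some h')
      have h₀ : ((0 : k), (1 : k)) ∈ g (some t) := by
        convert (g (some t)).smul_mem (t - s)⁻¹ ((g (some t)).sub_mem (hg (some t))
          (h ▸ hg (some s))) using 1
        ext <;> simp [p, hts]
      exact hS.ne_top _ (hgS (some t)) (eq_top h₀ (hg (some t)))
  calc #k + 1 = #(Option k) := mk_option.symm
    _ ≤ #S := mk_le_of_injective (f := fun o => ⟨g o, hgS o⟩)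
      fun o o' h => hg_inj (congrArg Subtype.val h)

theorem IsProperCover.two_le_rank {S : Set (Submodule k V)} (hS : IsProperCover S) :
    2 ≤ Module.rank k V := by
  rw [Cardinal.two_le_iff_one_lt]
  by_contra! h
  obtain ⟨v₀, hv₀⟩ := rank_le_one_iff.mp h
  exact hS.span_singleton_ne_top v₀
    (eq_top_iff'.mpr fun v => mem_span_singleton.mpr (hv₀ v))

theorem IsProperCover.card_add_one_le [FiniteDimensional k V] {S : Set (Submodule k V)}
    (hS : IsProperCover S) : #k + 1 ≤ #S := by
  induction hn : Module.finrank k V using Nat.strong_induction_on generalizing V with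
  | _ n ih =>
  have : Nontrivial V := rank_pos_iff_nontrivial.mp (two_pos.trans_le hS.two_le_rank)
  obtain ⟨a, ha⟩ := exists_ne (0 : V)
  by_cases hb : ∃ b : V, ∀ W ∈ S, a ∈ W → b ∉ W
  · obtain ⟨b, hb⟩ := hb
    let φ := (LinearMap.toSpanSingleton k V a).coprod (LinearMap.toSpanSingleton k V b)
    have hφ : IsProperCover (Submodule.comap φ '' S) := hS.comap φ fun W hW h =>
      hb W hW (h ⟨(1, 0), by simp [φ]⟩) (h ⟨(0, 1), by simp [φ]⟩)
    exact hφ.card_add_one_le_of_prod.trans mk_image_le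
  · push Not at hb
    let Sa := {W ∈ S | a ∈ W}
    have hSa : IsProperCover Sa :=
      ⟨fun W hW => hS.ne_top W hW.1, fun v => by
        obtain ⟨W, hW, haW, hvW⟩ := hb v
        exact ⟨W, ⟨hW, haW⟩, hvW⟩⟩
    have hq := hSa.map_mkQ (span k {a}) fun W hW h => by
      rwa [sup_eq_right.mpr ((span_singleton_le_iff_mem a W).mpr hW.2)] at h
    have hrank : Module.finrank k (V ⧸ span k {a}) < n := by
      have := (span k {a}).finrank_quotient_add_finrank
      rw [finrank_span_singleton ha] at this
      omega
    calc #k + 1 ≤ #(map (span k {a}).mkQ '' Sa) := ih _ hrank hq rfl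
      _ ≤ #Sa := mk_image_le
      _ ≤ #S := mk_le_mk_of_subset fun W hW => hW.1

theorem exists_isProperCover_card_eq (h : 2 ≤ Module.rank k V) :
    ∃ S : Set (Submodule k V), IsProperCover S ∧ #S = #k + 1 := by
  have : Nontrivial V := rank_pos_iff_nontrivial.mp (two_pos.trans_le h)
  obtain ⟨a, ha⟩ := exists_ne (0 : V)
  obtain ⟨b, hab⟩ := exists_linearIndependent_pair_of_one_lt_rank
    (Cardinal.one_lt_two.trans_le h) ha
  let φ := (LinearMap.toSpanSingleton k V a).coprod (LinearMap.toSpanSingleton k V b)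
  have hφ : LinearMap.ker φ = ⊥ := LinearMap.ker_eq_bot'.mpr fun v hv =>
    Prod.ext_iff.mpr (LinearIndependent.pair_iff.mp hab v.1 v.2 (by simpa [φ] using hv))
  obtain ⟨ψ, hψ⟩ := φ.exists_leftInverse_of_injective hφ
  have hψ_surj : Function.Surjective ψ := fun v => ⟨φ v, LinearMap.congr_fun hψ v⟩
  obtain ⟨S, hS, hcard⟩ := exists_isProperCover_prod_card_eq (k := k)
  refine ⟨comap ψ '' S, hS.comap_of_surjective hψ_surj, ?_⟩
  rw [mk_image_eq (comap_injective_of_surjective hψ_surj), hcard]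

end Field

section Torsion

variable {R N : Type*} [CommRing R] [AddCommGroup N] [Module R N]

theorem isMaximal_annihilator_quotient {P : Submodule R N} (hP : IsCoatom P) :
    (Module.annihilator R (N ⧸ P)).IsMaximal :=
  have : IsSimpleModule R (N ⧸ P) := isSimpleModule_iff_isCoatom.mpr hP
  IsSimpleModule.annihilator_isMaximal

theorem torsionBySet_le_of_isCoprime {I : Ideal R} {P : Submodule R N}
    (h : IsCoprime I (Module.annihilator R (N ⧸ P))) : torsionBySet R N I ≤ P := by
  obtain ⟨i, hi, j, hj, hij⟩ := Ideal.isCoprime_iff_exists.mp h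
  intro x hx
  have hix : i • x = 0 := (mem_torsionBySet_iff _ _).mp hx ⟨i, hi⟩
  have hjx : j • x ∈ P := by
    rw [← Quotient.mk_eq_zero, Quotient.mk_smul]
    exact Module.mem_annihilator.mp hj _
  have hx' : x = i • x + j • x := by rw [← add_smul, hij, one_smul]
  rw [hx', hix, zero_add]
  exact hjx

theorem iSup_torsionBySet_eq_top [IsSemisimpleModule R N] :
    ⨆ m : MaximalSpectrum R, torsionBySet R N (m.asIdeal : Set R) = ⊤ := by
  refine top_unique ?_
  rw [← IsSemisimpleModule.sSup_simples_eq_top]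
  refine sSup_le fun T (hT : IsSimpleModule R T) =>
    le_iSup_of_le ⟨_, IsSimpleModule.annihilator_isMaximal (R := R) (M := T)⟩ fun x hx => ?_
  exact (mem_torsionBySet_iff _ _).mpr fun r =>
    congrArg Subtype.val (Module.mem_annihilator.mp r.2 (⟨x, hx⟩ : T))

theorem exists_finset_iSup_torsionBySet_eq_top [IsSemisimpleModule R N] [IsNoetherian R N] :
    ∃ G : Finset (MaximalSpectrum R),
      ⨆ m ∈ G, torsionBySet R N (m.asIdeal : Set R) = ⊤ := by
  have htop : IsCompactElement (⊤ : Submodule R N) :=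
    (CompleteLattice.isSupFiniteCompact_iff_all_elements_compact _).mp
      (CompleteLattice.WellFoundedGT.isSupFiniteCompact _) ⊤
  obtain ⟨G, hG⟩ := CompleteLattice.IsCompactElement.exists_finset_of_le_iSup _ htop _
    iSup_torsionBySet_eq_top.ge
  exact ⟨G, top_unique hG⟩

theorem sum_mem_iff_of_annihilator_eq {P : Submodule R N} {m₀ : MaximalSpectrum R}
    (hP : Module.annihilator R (N ⧸ P) = m₀.asIdeal) (G : Finset (MaximalSpectrum R))
    {v : MaximalSpectrum R → N} (hv : ∀ m, v m ∈ torsionBySet R N (m.asIdeal : Set R)) :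
    ∑ m ∈ G, v m ∈ P ↔ (m₀ ∈ G → v m₀ ∈ P) := by
  classical
  have hvP : ∀ m ∈ G.erase m₀, v m ∈ P := fun m hm =>
    torsionBySet_le_of_isCoprime
      (hP ▸ MaximalSpectrum.isCoprime_of_ne (Finset.ne_of_mem_erase hm)) (hv m)
  by_cases hm₀ : m₀ ∈ G
  · rw [← Finset.add_sum_erase G v hm₀, P.add_mem_iff_left (sum_mem hvP)]
    exact ⟨fun h _ => h, fun h => h hm₀⟩
  · refine iff_of_true ?_ fun h => absurd h hm₀
    rw [← Finset.erase_eq_of_notMem hm₀]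
    exact sum_mem hvP

theorem eq_top_of_torsionBySet_le {G : Finset (MaximalSpectrum R)}
    (hG : ⨆ m ∈ G, torsionBySet R N (m.asIdeal : Set R) = ⊤) {P : Submodule R N}
    {m₀ : MaximalSpectrum R} (hP : Module.annihilator R (N ⧸ P) = m₀.asIdeal)
    (hle : m₀ ∈ G → torsionBySet R N (m₀.asIdeal : Set R) ≤ P) : P = ⊤ := by
  refine eq_top_iff'.mpr fun x => ?_
  obtain ⟨μ, rfl⟩ := (mem_iSup_finset_iff_exists_sum _ x).mp (hG ▸ mem_top)
  exact (sum_mem_iff_of_annihilator_eq hP G fun m => (μ m).2).mpr fun h => hle h (μ m₀).2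

theorem exists_isProperCover_torsionBySet [IsSemisimpleModule R N] [IsNoetherian R N]
    {U : Set (Submodule R N)} (hU : IsProperCover U) (hcoatom : ∀ P ∈ U, IsCoatom P) :
    ∃ m : MaximalSpectrum R, IsProperCover
      (comap (torsionBySet R N (m.asIdeal : Set R)).subtype ''
        {P ∈ U | Module.annihilator R (N ⧸ P) = m.asIdeal}) := by
  obtain ⟨G, hG⟩ := exists_finset_iSup_torsionBySet_eq_top (R := R) (N := N)
  have not_le {P : Submodule R N} (hPU : P ∈ U) {m : MaximalSpectrum R}
      (hP : Module.annihilator R (N ⧸ P) = m.asIdeal) :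
      ¬ torsionBySet R N (m.asIdeal : Set R) ≤ P := fun hle =>
    (hcoatom P hPU).1 (eq_top_of_torsionBySet_le hG hP fun _ => hle)
  by_contra! h
  have avoid (m : MaximalSpectrum R) : ∃ x ∈ torsionBySet R N (m.asIdeal : Set R),
      ∀ P ∈ U, Module.annihilator R (N ⧸ P) = m.asIdeal → x ∉ P := by
    by_contra! h'
    refine h m ⟨?_, fun x => ?_⟩
    · rintro _ ⟨P, ⟨hPU, hP⟩, rfl⟩ htop
      exact not_le hPU hP (comap_subtype_eq_top.mp htop)
    · obtain ⟨P, hPU, hP, hx⟩ := h' x x.2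
      exact ⟨_, ⟨P, ⟨hPU, hP⟩, rfl⟩, hx⟩
  choose v hv hvP using avoid
  obtain ⟨P, hPU, hP⟩ := hU.exists_mem (∑ m ∈ G, v m)
  let m₀ : MaximalSpectrum R := ⟨_, isMaximal_annihilator_quotient (hcoatom P hPU)⟩
  have hvm₀ := (sum_mem_iff_of_annihilator_eq (m₀ := m₀) rfl G hv).mp hP
  by_cases hm₀ : m₀ ∈ G
  · exact hvP m₀ P hPU rfl (hvm₀ hm₀)
  · exact (hcoatom P hPU).1
      (eq_top_of_torsionBySet_le hG (m₀ := m₀) rfl fun h => absurd h hm₀)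

theorem rank_torsionBySet_le_rank_quotient [IsSemisimpleModule R N] (I : Ideal R) :
    Module.rank (R ⧸ I) (torsionBySet R N (I : Set R))
      ≤ Module.rank (R ⧸ I) (N ⧸ (I • ⊤ : Submodule R N)) := by
  obtain ⟨C, hC⟩ := ComplementedLattice.exists_isCompl (torsionBySet R N (I : Set R))
  have hIC : (I • ⊤ : Submodule R N) ≤ C := by
    rw [← hC.sup_eq_top, smul_sup]
    refine sup_le (smul_le.mpr fun r hr x hx => ?_) smul_le_right
    rw [(mem_torsionBySet_iff _ _).mp hx ⟨r, hr⟩]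
    exact C.zero_mem
  let f := (I • ⊤ : Submodule R N).mkQ ∘ₗ (torsionBySet R N (I : Set R)).subtype
  have hf : Function.Injective f := by
    rw [← LinearMap.ker_eq_bot, LinearMap.ker_comp, ker_mkQ, ← disjoint_iff_comap_eq_bot]
    exact hC.disjoint.mono_right hIC
  exact LinearMap.rank_le_of_injective
    (f.extendScalarsOfSurjective Ideal.Quotient.mk_surjective) hf

end Torsion

theorem rank_quotient_le_of_surjective {R : Type*} {M N : Type u} [CommRing R] [AddCommGroup M]
    [Module R M] [AddCommGroup N] [Module R N] {f : M →ₗ[R] N} (hf : Function.Surjective f)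
    (I : Ideal R) :
    Module.rank (R ⧸ I) (N ⧸ (I • ⊤ : Submodule R N))
      ≤ Module.rank (R ⧸ I) (M ⧸ (I • ⊤ : Submodule R M)) := by
  let g := mapQ _ _ f (smul_top_le_comap_smul_top I f)
  have hg : Function.Surjective g := by
    rw [← LinearMap.range_eq_top, range_mapQ, LinearMap.range_eq_top.mpr hf, map_top, range_mkQ]
  exact LinearMap.rank_le_of_surjective
    (g.extendScalarsOfSurjective Ideal.Quotient.mk_surjective) hg

section Quotient

attribute [local instance] Ideal.Quotient.field

variable {R M : Type u} [CommRing R] [AddCommGroup M] [Module R M]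

theorem exists_two_le_rank_torsionBySet [IsSemisimpleModule R M] [IsNoetherian R M]
    {S : Set (Submodule R M)} (hS : IsProperCover S) :
    ∃ m : MaximalSpectrum R,
      2 ≤ Module.rank (R ⧸ m.asIdeal) (torsionBySet R M (m.asIdeal : Set R)) ∧
        #(R ⧸ m.asIdeal) + 1 ≤ #S := by
  have : IsCoatomic (Submodule R M) := isCoatomic_of_orderTop_gt_wellFounded wellFounded_gt
  obtain ⟨U, hU, hcoatom, hUS⟩ := hS.exists_isCoatom
  obtain ⟨m, hm⟩ := exists_isProperCover_torsionBySet hU hcoatom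
  have hm' := hm.preimage_restrictScalars (A := R ⧸ m.asIdeal) Ideal.Quotient.mk_surjective
  have : IsNoetherian (R ⧸ m.asIdeal) (torsionBySet R M (m.asIdeal : Set R)) :=
    isNoetherian_of_tower R inferInstance
  refine ⟨m, hm'.two_le_rank, ?_⟩
  calc #(R ⧸ m.asIdeal) + 1 ≤ #(restrictScalars R ⁻¹' _) := hm'.card_add_one_le
    _ ≤ #(Submodule.comap _ '' _) :=
      mk_preimage_of_injective _ _ (restrictScalars_injective R _ _)
    _ ≤ #{P ∈ U | _} := mk_image_le
    _ ≤ #U := mk_le_mk_of_subset fun P hP => hP.1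
    _ ≤ #S := hUS

theorem exists_isProperCover_card_eq_of_mem_SMax {m : MaximalSpectrum R} (hm : m ∈ SMax R M) :
    ∃ S : Set (Submodule R M), IsProperCover S ∧ #S = #(R ⧸ m.asIdeal) + 1 := by
  obtain ⟨S, hS, hcard⟩ := exists_isProperCover_card_eq hm
  have hπ := (m.asIdeal • ⊤ : Submodule R M).mkQ_surjective
  refine ⟨_, (hS.image_restrictScalars (R := R)).comap_of_surjective hπ, ?_⟩
  rw [mk_image_eq (comap_injective_of_surjective hπ),
    mk_image_eq (restrictScalars_injective R _ _), hcard]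

end Quotient

end Submodule

open Submodule

theorem coveringNumber_le {R M : Type u} [Ring R] [AddCommGroup M] [Module R M]
    {S : Set (Submodule R M)} (hS : IsProperCover S) : coveringNumber R M ≤ #S :=
  csInf_le' ⟨S, (isProperCover_iff.mp hS).1, (isProperCover_iff.mp hS).2, rfl⟩

theorem le_coveringNumber {R M : Type u} [Ring R] [AddCommGroup M] [Module R M] {c : Cardinal}
    {S₀ : Set (Submodule R M)} (hS₀ : IsProperCover S₀)
    (h : ∀ S : Set (Submodule R M), IsProperCover S → c ≤ #S) : c ≤ coveringNumber R M :=
  le_csInf ⟨_, S₀, (isProperCover_iff.mp hS₀).1, (isProperCover_iff.mp hS₀).2, rfl⟩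
    fun _ ⟨S, hne, hcov, hc⟩ => hc ▸ h S (isProperCover_iff.mpr ⟨hne, hcov⟩)

theorem exists_mem_SMax_of_isProperCover {R M : Type u} [CommRing R] [AddCommGroup M]
    [Module R M] {J : Submodule R M} (hJ : IsSmallSubmodule J) [IsSemisimpleModule R (M ⧸ J)]
    [IsNoetherian R (M ⧸ J)] {S : Set (Submodule R M)} (hS : IsProperCover S) :
    ∃ m ∈ SMax R M, #(R ⧸ m.asIdeal) + 1 ≤ #S := by
  obtain ⟨m, hrank, hcard⟩ := exists_two_le_rank_torsionBySet (hS.map_mkQ J fun p _ => hJ p)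
  refine ⟨m, ?_, hcard.trans mk_image_le⟩
  exact hrank.trans ((rank_torsionBySet_le_rank_quotient _).trans
    (rank_quotient_le_of_surjective J.mkQ_surjective _))

/-- Let `M` be an `R`-module with small Jacobson radical and finite dual Goldie dimension
(i.e. `M/Jac(M)` is finite-length semisimple) over a commutative unital ring `R`. If
`S_M` is nonempty then `σ(M,R) = min_{m ∈ S_M} |R/m| + 1`; if `S_M` is empty and `M` is
finitely generated, then `M` is cyclic. -/
theorem stmt13 (R M : Type u) [CommRing R] [AddCommGroup M] [Module R M]
    (hsmall : IsSmallSubmodule (moduleJacobson R M))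
    (hss : IsSemisimpleModule R (M ⧸ moduleJacobson R M))
    (hfl : IsFiniteLength R (M ⧸ moduleJacobson R M)) :
    ((SMax R M).Nonempty →
      coveringNumber R M = ⨅ m : SMax R M, (#(R ⧸ (m : MaximalSpectrum R).asIdeal) + 1)) ∧
    (SMax R M = ∅ → Module.Finite R M → ∃ x : M, Submodule.span R {x} = ⊤) := by
  have : IsNoetherian R (M ⧸ moduleJacobson R M) :=
    (isFiniteLength_iff_isNoetherian_isArtinian.mp hfl).1
  refine ⟨fun hne => ?_, fun hempty _ => ?_⟩
  · have : Nonempty (SMax R M) := hne.to_subtype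
    obtain ⟨S₀, hS₀, -⟩ := exists_isProperCover_card_eq_of_mem_SMax hne.some_mem
    refine le_antisymm (le_ciInf fun m => ?_) (le_coveringNumber hS₀ fun S hS => ?_)
    · obtain ⟨S, hS, hcard⟩ := exists_isProperCover_card_eq_of_mem_SMax m.2
      exact (coveringNumber_le hS).trans_eq hcard
    · obtain ⟨m, hm, hcard⟩ := exists_mem_SMax_of_isProperCover hsmall hS
      exact (ciInf_le' (fun m : SMax R M => #(R ⧸ (m : MaximalSpectrum R).asIdeal) + 1)
        ⟨m, hm⟩).trans hcard
  · by_contra! hcyclic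
    obtain ⟨m, hm, -⟩ :=
      exists_mem_SMax_of_isProperCover hsmall (isProperCover_range_span_singleton hcyclic)
    exact hempty.subset hm
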